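/- Let Ψ ⊆ Δ_ℓ^+ be a root ideal, M a multiset supported in [ℓ], γ ∈ ℤ^ℓ, and z ∈ [ℓ]. Suppose (1) Ψ has a ceiling in columns z, z+1 (columns z and z+1 have the same length), (2) Ψ has a wall in rows z, z+1 (rows z and z+1 have the same length), and (3) m_M(z) + 1 = m_M(z+1). Then K(Ψ; M; γ) + K(Ψ; M; s_z γ − ε_z + ε_{z+1}) = 0, where s_z γ swaps entries z and z+1 of γ. -/

import Mathlib

open scoped BigOperators

noncomputable section

attribute [local instance] Classical.propDecidable

/-- The ring of symmetric functions over `ℚ`, modeled as the polynomial ring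
`ℚ[h₁, h₂, …]` with variable `n` corresponding to the complete homogeneous
symmetric function `h_{n+1}`. -/
abbrev Lambda : Type := MvPolynomial ℕ ℚ

/-- The complete homogeneous symmetric function `h_m` for `m : ℤ`, with the
conventions `h_m = 0` for `m < 0` and `h_0 = 1`. -/
def hh (m : ℤ) : Lambda :=
  if m < 0 then 0 else if m = 0 then 1 else MvPolynomial.X (m.toNat - 1)

/-- Generalized binomial coefficient `C(n, k)` for `n : ℤ`, `k : ℕ`. -/
def zchoose (n : ℤ) (k : ℕ) : ℤ :=
  if 0 ≤ n then n.toNat.choose k else (-1) ^ k * ((k - 1 - n).toNat.choose k)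

/-- `k_m^{(r)} = ∑_{i=0}^m C(r+i-1, i) h_{m-i}` (which is `0` for `m < 0`). -/
def kk (m : ℤ) (r : ℕ) : Lambda :=
  ∑ i ∈ Finset.range (m.toNat + 1), (zchoose ((r : ℤ) + i - 1) i : ℚ) • hh (m - i)

/-- `g_γ = det (k_{γ_i + j - i}^{(i-1)})_{1 ≤ i,j ≤ ℓ}` (here indices are 1-based;
`γ : ℕ → ℤ` is read on `[1, ℓ]`). -/
def gf (ℓ : ℕ) (γ : ℕ → ℤ) : Lambda :=
  Matrix.det (Matrix.of fun i j : Fin ℓ => kk (γ (i.1 + 1) + (j.1 : ℤ) - (i.1 : ℤ)) i.1)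

/-- `Δ⁺_ℓ = {(i,j) : 1 ≤ i < j ≤ ℓ}`. -/
def Delta (ℓ : ℕ) : Finset (ℕ × ℕ) :=
  (Finset.Icc 1 ℓ ×ˢ Finset.Icc 1 ℓ).filter fun p => p.1 < p.2

/-- A root ideal: an upper order ideal of `Δ⁺_ℓ` for the order
`(a,b) ≤ (c,d) ↔ a ≥ c ∧ b ≤ d`. -/
def IsRootIdeal (ℓ : ℕ) (Ψ : Finset (ℕ × ℕ)) : Prop :=
  Ψ ⊆ Delta ℓ ∧ ∀ p ∈ Ψ, ∀ q ∈ Delta ℓ, q.1 ≤ p.1 → p.2 ≤ q.2 → q ∈ Ψ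

/-- standard basis vector `ε_z`. -/
def eps (z : ℕ) : ℕ → ℤ := fun i => if i = z then 1 else 0

/-- `k_γ := k_{γ_1}^{(0)} ⋯ k_{γ_ℓ}^{(ℓ-1)}`. -/
def kprod (ℓ : ℕ) (γ : ℕ → ℤ) : Lambda :=
  ∏ i ∈ Finset.Icc 1 ℓ, kk (γ i) (i - 1)

/-- The net shift of `γ` produced by applying the raising operators `R_{ij}` for
all `(i,j) ∈ T`. -/
def epsR (T : Finset (ℕ × ℕ)) (i : ℕ) : ℤ :=
  ((T.filter fun p => p.1 = i).card : ℤ) - ((T.filter fun p => p.2 = i).card : ℤ)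

/-- The Katalan function
`K(Ψ; M; γ) = ∏_{z ∈ M} (1 - L_z) ∏_{(i,j) ∈ Ψ} (1 - R_{ij})⁻¹ g_γ`,
written via the equivalent finite expansion
`∏_{z ∈ M} (1 - L_z) ∏_{(i,j) ∈ Δ⁺_ℓ \ Ψ} (1 - R_{ij}) k_γ`. -/
def Katalan (ℓ : ℕ) (Ψ : Finset (ℕ × ℕ)) (M : Multiset ℕ) (γ : ℕ → ℤ) : Lambda :=
  (M.powerset.map fun S =>
    ((-1 : ℚ) ^ Multiset.card S) •
      ∑ T ∈ (Delta ℓ \ Ψ).powerset,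
        ((-1 : ℚ) ^ T.card) • kprod ℓ (fun i => γ i - S.count i + epsR T i)).sum

/-- The multiset `M` is supported in `[ℓ]`. -/
def SuppIn (ℓ : ℕ) (M : Multiset ℕ) : Prop := ∀ x ∈ M, 1 ≤ x ∧ x ≤ ℓ

/-- `L(R)`: the multiset of second components of the roots in `R`. -/
def colMultiset (R : Finset (ℕ × ℕ)) : Multiset ℕ := R.val.map Prod.snd

/-- `Δ^k(μ) = {(i,j) ∈ Δ⁺_ℓ : k - μ_i + i < j}`. -/
def Dk (ℓ k : ℕ) (μ : ℕ → ℤ) : Finset (ℕ × ℕ) :=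
  (Delta ℓ).filter fun p => (k : ℤ) - μ p.1 + (p.1 : ℤ) < (p.2 : ℤ)

/-- The (generalized) closed `k`-Schur Katalan function
`g̃_μ^{(k)} = K(Δ^k(μ); Δ^k(μ); μ)`. -/
def cKS (ℓ k : ℕ) (μ : ℕ → ℤ) : Lambda :=
  Katalan ℓ (Dk ℓ k μ) (colMultiset (Dk ℓ k μ)) μ

/-- `L_z g̃_μ^{(k)} = K(Δ^k(μ); Δ^k(μ); μ - ε_z)`. -/
def Lg (ℓ k : ℕ) (μ : ℕ → ℤ) (z : ℕ) : Lambda :=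
  Katalan ℓ (Dk ℓ k μ) (colMultiset (Dk ℓ k μ)) (fun i => μ i - eps z i)

/-- `μ ∈ P̃_ℓ^k`: `μ_i ≤ k` and `μ_1 + ℓ - 1 ≥ μ_2 + ℓ - 2 ≥ ⋯ ≥ μ_ℓ`. -/
def tP (ℓ k : ℕ) (μ : ℕ → ℤ) : Prop :=
  (∀ i, 1 ≤ i → i ≤ ℓ → μ i ≤ k) ∧ ∀ i, 1 ≤ i → i + 1 ≤ ℓ → μ (i + 1) ≤ μ i + 1

/-- `λ ∈ P_ℓ^k`: a `k`-bounded partition of length `ℓ` (weakly decreasing,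
parts in `[0, k]`, vanishing beyond row `ℓ`). -/
def IsPartition (ℓ k : ℕ) (lam : ℕ → ℤ) : Prop :=
  (∀ i, 1 ≤ i → i ≤ ℓ → 0 ≤ lam i ∧ lam i ≤ (k : ℤ)) ∧
  (∀ i, 1 ≤ i → lam (i + 1) ≤ lam i) ∧ (∀ i, ℓ < i → lam i = 0)

/-- `|λ|`, the size. -/
def psize (ℓ : ℕ) (lam : ℕ → ℤ) : ℤ := ∑ i ∈ Finset.Icc 1 ℓ, lam i

/-- A removable root of `Ψ`. -/
def Removable (ℓ : ℕ) (Ψ : Finset (ℕ × ℕ)) (p : ℕ × ℕ) : Prop :=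
  p ∈ Ψ ∧ IsRootIdeal ℓ (Ψ.erase p)

/-- An addable root of `Ψ`. -/
def Addable (ℓ : ℕ) (Ψ : Finset (ℕ × ℕ)) (p : ℕ × ℕ) : Prop :=
  p ∈ Delta ℓ ∧ p ∉ Ψ ∧ IsRootIdeal ℓ (insert p Ψ)

/-- Row `r` of `Ψ`. -/
def rowSet (Ψ : Finset (ℕ × ℕ)) (r : ℕ) : Finset ℕ :=
  (Ψ.filter fun p => p.1 = r).image Prod.snd

/-- Column `c` of `Ψ`. -/
def colSet (Ψ : Finset (ℕ × ℕ)) (c : ℕ) : Finset ℕ :=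
  (Ψ.filter fun p => p.2 = c).image Prod.fst

/-- `Ψ` has a wall in rows `r, r+1`. -/
def HasWall (Ψ : Finset (ℕ × ℕ)) (r : ℕ) : Prop :=
  (rowSet Ψ r).card = (rowSet Ψ (r + 1)).card

/-- `Ψ` has a ceiling in columns `c, c+1`. -/
def HasCeiling (Ψ : Finset (ℕ × ℕ)) (c : ℕ) : Prop :=
  (colSet Ψ c).card = (colSet Ψ (c + 1)).card

/-- `Ψ` has a mirror in rows `r, r+1`. -/
def HasMirror (ℓ : ℕ) (Ψ : Finset (ℕ × ℕ)) (r : ℕ) : Prop :=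
  ∃ c, r + 2 ≤ c ∧ c ≤ ℓ - 1 ∧ Removable ℓ Ψ (r, c) ∧ Removable ℓ Ψ (r + 1, c + 1)

/-- `b` is the bottom row of the root ideal `Ψ` (with `b = 0` if `Ψ = ∅`). -/
def IsBottom (Ψ : Finset (ℕ × ℕ)) (b : ℕ) : Prop :=
  (∀ p ∈ Ψ, p.1 ≤ b) ∧ (b = 0 ∨ ∃ q, (b, q) ∈ Ψ)

/-- `downStep ℓ Ψ x j` means `down_Ψ(x) = j`, i.e. `(x,j)` is a removable root. -/
def downStep (ℓ : ℕ) (Ψ : Finset (ℕ × ℕ)) (x j : ℕ) : Prop := Removable ℓ Ψ (x, j)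

/-- Being in the same bounce path of `Ψ`. -/
def SamePath (ℓ : ℕ) (Ψ : Finset (ℕ × ℕ)) : ℕ → ℕ → Prop :=
  Relation.EqvGen (downStep ℓ Ψ)

/-- `top_Ψ(x)`: the minimum vertex of the bounce path of `Ψ` containing `x`. -/
def topV (ℓ : ℕ) (Ψ : Finset (ℕ × ℕ)) (x : ℕ) : ℕ := sInf {y | SamePath ℓ Ψ y x}

/-- The algebra homomorphism `Λ → Λ[t]`, `f ↦ ∑_d (e_d^⊥ f) t^d`; it is the
unique algebra map sending `h_m ↦ h_m + t h_{m-1}`. -/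
def Eop : Lambda →ₐ[ℚ] Polynomial Lambda :=
  MvPolynomial.aeval fun n =>
    Polynomial.C (MvPolynomial.X n) + Polynomial.X * Polynomial.C (hh (n : ℤ))

/-- `e_d^⊥`, the Hall-adjoint of multiplication by the elementary symmetric
function `e_d`. -/
def eperp (d : ℕ) (f : Lambda) : Lambda := (Eop f).coeff d

/-- `G_{1^m}^⊥ = ∑_{i ≥ 0} (-1)^i C(m-1+i, m-1) e_{m+i}^⊥`, the Hall-adjoint of
multiplication by the stable Grothendieck polynomial `G_{1^m}`. -/
def Gperp (m : ℕ) (f : Lambda) : Lambda :=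
  (Eop f).sum fun d c =>
    (if m ≤ d then
        ((-1 : ℚ)) ^ (d - m) * ((zchoose ((m : ℤ) - 1 + ((d - m : ℕ) : ℤ)) (d - m) : ℤ) : ℚ)
      else 0) • c

/-! Put `Φ = ∏_{a ∈ M} (1 - L_a) k`, so that `K(Ψ; M; γ) = ∑_{T ⊆ Δ⁺ \ Ψ} (-1)^{|T|} Φ(γ + ε_T)`,
where `ε_T` (`epsR T`) is the shift produced by the raising operators of `T`.

Since `k^{(z)}_m - k^{(z)}_{m-1} = k^{(z-1)}_m`, the function `(1 - L_{z+1}) k_β` is the product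
`k^{(0)}_{β_1} ⋯ k^{(z-1)}_{β_z} k^{(z-1)}_{β_{z+1}} ⋯`, symmetric in `β_z, β_{z+1}`. Removing one
copy of `z + 1` from `M` leaves a multiset in which `z` and `z + 1` occur equally often, so `Φ` is
invariant under `s_z`.

The wall and the ceiling say that `s_z` permutes the roots of `Δ⁺ \ Ψ` other than
`α = (z, z + 1)`, and `α ∈ Δ⁺ \ Ψ`. Splitting the sum according to whether `α ∈ T` and
reindexing by `T ↦ s_z T`, each term of `K(Ψ; M; s_z γ - ε_z + ε_{z+1})` is the negative of the
matching term of `K(Ψ; M; γ)`. -/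

open Finset

lemma hh_of_neg {m : ℤ} (h : m < 0) : hh m = 0 := by simp [hh, h]

lemma zchoose_zero (n : ℤ) : zchoose n 0 = 1 := by
  unfold zchoose; split_ifs <;> simp

lemma zchoose_natCast (a k : ℕ) : zchoose a k = a.choose k := by simp [zchoose]

lemma kk_eq_sum_range {m : ℤ} {N : ℕ} (hN : m.toNat < N) (r : ℕ) :
    kk m r = ∑ i ∈ range N, (zchoose ((r : ℤ) + i - 1) i : ℚ) • hh (m - i) := by
  refine sum_subset (range_subset_range.2 hN) fun i _ hi => ?_
  rw [hh_of_neg (by simp at hi; omega), smul_zero]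

lemma zchoose_succ_succ (r i : ℕ) :
    zchoose ((r : ℤ) + 1 + (i + 1) - 1) (i + 1) =
      zchoose ((r : ℤ) + (i + 1) - 1) (i + 1) + zchoose ((r : ℤ) + 1 + i - 1) i := by
  have e₁ : (r : ℤ) + 1 + (i + 1) - 1 = (r + i + 1 : ℕ) := by push_cast; ring
  have e₂ : (r : ℤ) + (i + 1) - 1 = (r + i : ℕ) := by push_cast; ring
  have e₃ : (r : ℤ) + 1 + i - 1 = (r + i : ℕ) := by push_cast; ring
  rw [e₁, e₂, e₃, zchoose_natCast, zchoose_natCast, zchoose_natCast, Nat.choose_succ_succ']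
  push_cast
  ring

lemma kk_succ (m : ℤ) (r : ℕ) : kk m (r + 1) = kk m r + kk (m - 1) (r + 1) := by
  rw [kk_eq_sum_range (N := m.toNat + 2) (by omega), kk_eq_sum_range (N := m.toNat + 2) (by omega),
    kk_eq_sum_range (m := m - 1) (N := m.toNat + 1) (by omega), sum_range_succ',
    sum_range_succ' _ (m.toNat + 1)]
  have shift : ∀ x : ℤ, m - (x + 1) = m - 1 - x := fun x => by ring
  push_cast
  simp only [zchoose_succ_succ, zchoose_zero, Int.cast_add, add_smul, sum_add_distrib, shift]
  abel

/-- `(1 - L_a) f`, where the lowering operator acts by `L_a f (β) = f (β - ε_a)`. -/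
def oneSubLower (a : ℕ) (f : (ℕ → ℤ) → Lambda) (β : ℕ → ℤ) : Lambda := f β - f (β - eps a)

/-- `∏_{a ∈ M} (1 - L_a) f`, expanded over the sub-multisets of `M`. -/
def lowerProd (M : Multiset ℕ) (f : (ℕ → ℤ) → Lambda) (β : ℕ → ℤ) : Lambda :=
  (M.powerset.map fun S => ((-1 : ℚ) ^ Multiset.card S) • f (β - fun i => (S.count i : ℤ))).sum

lemma lowerProd_zero (f : (ℕ → ℤ) → Lambda) : lowerProd 0 f = f := by
  funext β
  simp [lowerProd, ← Pi.zero_def]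

lemma lowerProd_cons (a : ℕ) (M : Multiset ℕ) (f : (ℕ → ℤ) → Lambda) :
    lowerProd (a ::ₘ M) f = lowerProd M (oneSubLower a f) := by
  funext β
  have count_cons : ∀ S : Multiset ℕ,
      β - (fun i => ((a ::ₘ S).count i : ℤ)) = β - (fun i => (S.count i : ℤ)) - eps a := by
    intro S; funext i
    simp only [Pi.sub_apply, Multiset.count_cons, eps]
    split_ifs <;> push_cast <;> ring
  simp only [lowerProd, oneSubLower, Multiset.powerset_cons, Multiset.map_add, Multiset.sum_add,
    Multiset.map_map, Function.comp_def, Multiset.card_cons, pow_succ, count_cons, smul_sub,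
    Multiset.sum_map_sub, mul_neg_one, neg_smul, Multiset.sum_map_neg]
  rw [sub_eq_add_neg]

lemma eps_perm_apply (σ : Equiv.Perm ℕ) (a i : ℕ) : eps (σ a) i = eps a (σ.symm i) := by
  simp [eps, Equiv.symm_apply_eq]

lemma lowerProd_comp_perm (σ : Equiv.Perm ℕ) (M : Multiset ℕ) (f : (ℕ → ℤ) → Lambda)
    (β : ℕ → ℤ) : lowerProd M f (β ∘ σ) = lowerProd (M.map σ) (fun β' => f (β' ∘ σ)) β := by
  induction M using Multiset.induction generalizing f with
  | empty => simp [lowerProd_zero]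
  | cons a M ih =>
    rw [Multiset.map_cons, lowerProd_cons, lowerProd_cons, ih]
    congr 1
    funext β'
    have hshift : (β' - eps (σ a)) ∘ σ = β' ∘ σ - eps a := by
      funext i; simp [eps_perm_apply]
    rw [oneSubLower, oneSubLower, hshift]

lemma Multiset.map_swap_eq_self {α : Type*} [DecidableEq α] {M : Multiset α} {a b : α}
    (h : M.count a = M.count b) :
    M.map (Equiv.swap a b) = M := by
  ext x
  have hx := Multiset.count_map_eq_count' _ M (Equiv.swap a b).injective (Equiv.swap a b x)
  rw [Equiv.swap_apply_self] at hx
  rw [hx]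
  rcases eq_or_ne x a with rfl | hxa
  · simp [h]
  rcases eq_or_ne x b with rfl | hxb
  · simp [h]
  · rw [Equiv.swap_apply_of_ne_of_ne hxa hxb]

section Swap

variable {ℓ z : ℕ}

lemma kprod_eq_mul_prod_sdiff (hz : 1 ≤ z) (hzl : z + 1 ≤ ℓ) (β : ℕ → ℤ) :
    kprod ℓ β = kk (β z) (z - 1) * kk (β (z + 1)) z *
      ∏ i ∈ Icc 1 ℓ \ {z, z + 1}, kk (β i) (i - 1) := by
  have hsub : {z, z + 1} ⊆ Icc 1 ℓ := by
    intro i; simp only [mem_insert, mem_singleton, mem_Icc]; omega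
  rw [kprod, ← prod_sdiff hsub, prod_pair (by omega), Nat.add_sub_cancel]
  ring

lemma oneSubLower_kprod (hz : 1 ≤ z) (hzl : z + 1 ≤ ℓ) (β : ℕ → ℤ) :
    oneSubLower (z + 1) (kprod ℓ) β = kk (β z) (z - 1) * kk (β (z + 1)) (z - 1) *
      ∏ i ∈ Icc 1 ℓ \ {z, z + 1}, kk (β i) (i - 1) := by
  have rest : ∏ i ∈ Icc 1 ℓ \ {z, z + 1}, kk ((β - eps (z + 1)) i) (i - 1) =
      ∏ i ∈ Icc 1 ℓ \ {z, z + 1}, kk (β i) (i - 1) := by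
    refine prod_congr rfl fun i hi => ?_
    simp only [mem_sdiff, mem_insert, mem_singleton] at hi
    simp [eps, not_or.1 hi.2]
  have hk := kk_succ (β (z + 1)) (z - 1)
  rw [Nat.sub_add_cancel hz] at hk
  rw [oneSubLower, kprod_eq_mul_prod_sdiff hz hzl, kprod_eq_mul_prod_sdiff hz hzl, rest]
  simp only [Pi.sub_apply, eps, if_neg (by omega : z ≠ z + 1), if_true, sub_zero]
  rw [hk]
  ring

lemma oneSubLower_kprod_comp_swap (hz : 1 ≤ z) (hzl : z + 1 ≤ ℓ) (β : ℕ → ℤ) :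
    oneSubLower (z + 1) (kprod ℓ) (β ∘ Equiv.swap z (z + 1)) = oneSubLower (z + 1) (kprod ℓ) β := by
  have rest : ∏ i ∈ Icc 1 ℓ \ {z, z + 1}, kk ((β ∘ Equiv.swap z (z + 1)) i) (i - 1) =
      ∏ i ∈ Icc 1 ℓ \ {z, z + 1}, kk (β i) (i - 1) := by
    refine prod_congr rfl fun i hi => ?_
    simp only [mem_sdiff, mem_insert, mem_singleton, not_or] at hi
    simp [Equiv.swap_apply_of_ne_of_ne hi.2.1 hi.2.2]
  rw [oneSubLower_kprod hz hzl, oneSubLower_kprod hz hzl, rest]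
  simp only [Function.comp_apply, Equiv.swap_apply_left, Equiv.swap_apply_right]
  ring

lemma lowerProd_kprod_comp_swap (hz : 1 ≤ z) (hzl : z + 1 ≤ ℓ) {M : Multiset ℕ}
    (hcount : M.count z + 1 = M.count (z + 1)) (β : ℕ → ℤ) :
    lowerProd M (kprod ℓ) (β ∘ Equiv.swap z (z + 1)) = lowerProd M (kprod ℓ) β := by
  have hmem : z + 1 ∈ M := by rw [← Multiset.count_pos]; omega
  have hcount' : (M.erase (z + 1)).count z = (M.erase (z + 1)).count (z + 1) := by
    rw [Multiset.count_erase_of_ne (by omega), Multiset.count_erase_self]; omega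
  rw [← Multiset.cons_erase hmem, lowerProd_cons, lowerProd_comp_perm,
    Multiset.map_swap_eq_self hcount']
  simp only [oneSubLower_kprod_comp_swap hz hzl]

end Swap

lemma eps_sub_eps_comp_swap (a b : ℕ) :
    (eps a - eps b) ∘ Equiv.swap a b = -(eps a - eps b) := by
  funext i
  simp only [Function.comp_apply, Pi.sub_apply, Pi.neg_apply, eps, Equiv.swap_apply_def]
  split_ifs <;> simp_all

lemma epsR_eq_sum (T : Finset (ℕ × ℕ)) : epsR T = ∑ p ∈ T, (eps p.1 - eps p.2) := by
  funext i
  simp only [epsR, Finset.sum_apply, Pi.sub_apply, sum_sub_distrib, eps, card_filter]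
  push_cast
  simp only [eq_comm]

lemma epsR_insert {T : Finset (ℕ × ℕ)} {p : ℕ × ℕ} (hp : p ∉ T) :
    epsR (insert p T) = epsR T + (eps p.1 - eps p.2) := by
  rw [epsR_eq_sum, epsR_eq_sum, sum_insert hp, add_comm]

lemma epsR_image_perm (σ : Equiv.Perm ℕ) (T : Finset (ℕ × ℕ)) :
    epsR (T.image (Prod.map σ σ)) = epsR T ∘ σ.symm := by
  rw [epsR_eq_sum, epsR_eq_sum, sum_image (σ.injective.prodMap σ.injective).injOn]
  funext i
  simp only [Function.comp_apply, Finset.sum_apply, Pi.sub_apply, Prod.map_fst, Prod.map_snd,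
    eps_perm_apply]

lemma Finset.sum_powerset_image_of_involutive {α M : Type*} [DecidableEq α] [AddCommMonoid M]
    {s : Finset α} {τ : α → α} (hτ : Function.Involutive τ) (hs : ∀ p ∈ s, τ p ∈ s)
    (F : Finset α → M) : ∑ S ∈ s.powerset, F (S.image τ) = ∑ S ∈ s.powerset, F S := by
  have hinv : ∀ S : Finset α, (S.image τ).image τ = S := fun S => by
    rw [image_image, hτ.comp_self, image_id]
  have hmem : ∀ S ∈ s.powerset, S.image τ ∈ s.powerset := fun S hS => by
    simp only [mem_powerset, image_subset_iff] at hS ⊢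
    exact fun p hp => hs p (hS hp)
  exact sum_nbij' (image τ) (image τ) hmem hmem (fun S _ => hinv S) (fun S _ => hinv S)
    fun S _ => rfl

lemma katalan_eq_sum_lowerProd (ℓ : ℕ) (Ψ : Finset (ℕ × ℕ)) (M : Multiset ℕ) (γ : ℕ → ℤ) :
    Katalan ℓ Ψ M γ = ∑ T ∈ (Delta ℓ \ Ψ).powerset,
      ((-1 : ℚ) ^ #T) • lowerProd M (kprod ℓ) (γ + epsR T) := by
  have shift : ∀ (S : Multiset ℕ) (T : Finset (ℕ × ℕ)),
      (fun i => γ i - S.count i + epsR T i) = γ + epsR T - fun i => (S.count i : ℤ) := by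
    intro S T; funext i; simp only [Pi.add_apply, Pi.sub_apply]; ring
  simp only [Katalan, lowerProd, shift, Finset.smul_sum, Multiset.smul_sum, Multiset.map_map,
    Function.comp_def, smul_comm ((-1 : ℚ) ^ #_)]
  rw [sum_eq_multiset_sum, Multiset.sum_map_sum_map]
  rfl

lemma katalan_eq_sum_powerset_erase {ℓ : ℕ} {Ψ : Finset (ℕ × ℕ)} {a b : ℕ}
    (hab : (a, b) ∈ Delta ℓ \ Ψ) (M : Multiset ℕ) (γ : ℕ → ℤ) :
    Katalan ℓ Ψ M γ = ∑ S ∈ ((Delta ℓ \ Ψ).erase (a, b)).powerset, ((-1 : ℚ) ^ #S) •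
      (lowerProd M (kprod ℓ) (γ + epsR S) -
        lowerProd M (kprod ℓ) (γ + epsR S + (eps a - eps b))) := by
  set α := (a, b)
  set D := (Delta ℓ \ Ψ).erase α
  have hD : Delta ℓ \ Ψ = insert α D := (insert_erase hab).symm
  rw [katalan_eq_sum_lowerProd, hD, sum_powerset_insert (notMem_erase α _), ← sum_add_distrib]
  refine sum_congr rfl fun S hS => ?_
  have hαS : α ∉ S := fun h => notMem_erase α _ (mem_powerset.1 hS h)
  rw [card_insert_of_notMem hαS, epsR_insert hαS, pow_succ, mul_neg_one, neg_smul, smul_sub,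
    ← add_assoc, ← sub_eq_add_neg]

section RootIdeal

variable {ℓ : ℕ} {Ψ : Finset (ℕ × ℕ)}

lemma mem_Delta {p : ℕ × ℕ} : p ∈ Delta ℓ ↔ 1 ≤ p.1 ∧ p.1 < p.2 ∧ p.2 ≤ ℓ := by
  simp only [Delta, mem_filter, mem_product, mem_Icc]
  omega

lemma mem_rowSet {r j : ℕ} : j ∈ rowSet Ψ r ↔ (r, j) ∈ Ψ := by
  simp [rowSet]

lemma mem_colSet {c i : ℕ} : i ∈ colSet Ψ c ↔ (i, c) ∈ Ψ := by
  simp [colSet]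

lemma IsRootIdeal.rowSet_succ_subset (hΨ : IsRootIdeal ℓ Ψ) {r : ℕ} (hr : 1 ≤ r) :
    rowSet Ψ (r + 1) ⊆ rowSet Ψ r := by
  intro j hj
  rw [mem_rowSet] at hj ⊢
  have hd := mem_Delta.1 (hΨ.1 hj)
  exact hΨ.2 _ hj (r, j) (mem_Delta.2 ⟨hr, by simp at hd ⊢; omega, hd.2.2⟩) (by simp) le_rfl

lemma IsRootIdeal.colSet_subset_succ (hΨ : IsRootIdeal ℓ Ψ) {c : ℕ} (hc : c + 1 ≤ ℓ) :
    colSet Ψ c ⊆ colSet Ψ (c + 1) := by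
  intro i hi
  rw [mem_colSet] at hi ⊢
  have hd := mem_Delta.1 (hΨ.1 hi)
  exact hΨ.2 _ hi (i, c + 1) (mem_Delta.2 ⟨hd.1, by simp at hd ⊢; omega, hc⟩) le_rfl (by simp)

lemma IsRootIdeal.mem_iff_of_wall (hΨ : IsRootIdeal ℓ Ψ) {r : ℕ} (hr : 1 ≤ r)
    (hwall : HasWall Ψ r) (j : ℕ) : (r + 1, j) ∈ Ψ ↔ (r, j) ∈ Ψ := by
  rw [← mem_rowSet, ← mem_rowSet, eq_of_subset_of_card_le (hΨ.rowSet_succ_subset hr) hwall.le]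

lemma IsRootIdeal.mem_iff_of_ceiling (hΨ : IsRootIdeal ℓ Ψ) {c : ℕ} (hc : c + 1 ≤ ℓ)
    (hceil : HasCeiling Ψ c) (i : ℕ) : (i, c) ∈ Ψ ↔ (i, c + 1) ∈ Ψ := by
  rw [← mem_colSet, ← mem_colSet, eq_of_subset_of_card_le (hΨ.colSet_subset_succ hc) hceil.ge]

variable {z : ℕ}

lemma IsRootIdeal.swap_mem_iff_of_wall (hΨ : IsRootIdeal ℓ Ψ) (hz : 1 ≤ z)
    (hwall : HasWall Ψ z) (x j : ℕ) : (Equiv.swap z (z + 1) x, j) ∈ Ψ ↔ (x, j) ∈ Ψ := by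
  rcases eq_or_ne x z with rfl | hxz
  · rw [Equiv.swap_apply_left, hΨ.mem_iff_of_wall hz hwall]
  rcases eq_or_ne x (z + 1) with rfl | hxz'
  · rw [Equiv.swap_apply_right, hΨ.mem_iff_of_wall hz hwall]
  · rw [Equiv.swap_apply_of_ne_of_ne hxz hxz']

lemma IsRootIdeal.mem_swap_iff_of_ceiling (hΨ : IsRootIdeal ℓ Ψ) (hzl : z + 1 ≤ ℓ)
    (hceil : HasCeiling Ψ z) (i y : ℕ) : (i, Equiv.swap z (z + 1) y) ∈ Ψ ↔ (i, y) ∈ Ψ := by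
  rcases eq_or_ne y z with rfl | hyz
  · rw [Equiv.swap_apply_left, hΨ.mem_iff_of_ceiling hzl hceil]
  rcases eq_or_ne y (z + 1) with rfl | hyz'
  · rw [Equiv.swap_apply_right, hΨ.mem_iff_of_ceiling hzl hceil]
  · rw [Equiv.swap_apply_of_ne_of_ne hyz hyz']

lemma IsRootIdeal.mem_sdiff_of_wall (hΨ : IsRootIdeal ℓ Ψ) (hz : 1 ≤ z) (hzl : z + 1 ≤ ℓ)
    (hwall : HasWall Ψ z) : (z, z + 1) ∈ Delta ℓ \ Ψ := by
  refine mem_sdiff.2 ⟨mem_Delta.2 ⟨hz, by simp, hzl⟩, fun h => ?_⟩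
  have := mem_Delta.1 (hΨ.1 ((hΨ.mem_iff_of_wall hz hwall _).2 h))
  simp at this

lemma IsRootIdeal.prodMap_swap_mem (hΨ : IsRootIdeal ℓ Ψ) (hz : 1 ≤ z) (hzl : z + 1 ≤ ℓ)
    (hceil : HasCeiling Ψ z) (hwall : HasWall Ψ z) {p : ℕ × ℕ}
    (hp : p ∈ (Delta ℓ \ Ψ).erase (z, z + 1)) :
    Prod.map (Equiv.swap z (z + 1)) (Equiv.swap z (z + 1)) p ∈ (Delta ℓ \ Ψ).erase (z, z + 1) := by
  obtain ⟨a, b⟩ := p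
  simp only [mem_erase, mem_sdiff, mem_Delta, Prod.map_apply, ne_eq, Prod.mk.injEq,
    hΨ.swap_mem_iff_of_wall hz hwall, hΨ.mem_swap_iff_of_ceiling hzl hceil] at hp ⊢
  refine ⟨?_, ?_, hp.2.2⟩ <;> simp only [Equiv.swap_apply_def] <;> split_ifs <;> omega

end RootIdeal

theorem katalan_cancel_general (ℓ : ℕ) (Ψ : Finset (ℕ × ℕ)) (hΨ : IsRootIdeal ℓ Ψ)
    (M : Multiset ℕ) (hM : SuppIn ℓ M) (γ : ℕ → ℤ) (z : ℕ)
    (hz1 : 1 ≤ z)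
    (hceil : HasCeiling Ψ z) (hwall : HasWall Ψ z)
    (hcount : M.count z + 1 = M.count (z + 1)) :
    Katalan ℓ Ψ M γ +
      Katalan ℓ Ψ M
        (fun i => if i = z then γ (z + 1) - 1
          else if i = z + 1 then γ z + 1 else γ i) = 0 := by
  have hzl : z + 1 ≤ ℓ := (hM _ (Multiset.count_pos.1 (by omega))).2
  set σ := Equiv.swap z (z + 1)
  set e : ℕ → ℤ := eps z - eps (z + 1)
  have hγ : (fun i => if i = z then γ (z + 1) - 1 else if i = z + 1 then γ z + 1 else γ i) =
      γ ∘ σ - e := by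
    funext i
    simp only [Pi.sub_apply, Function.comp_apply, e, eps, σ, Equiv.swap_apply_def]
    split_ifs <;> omega
  have hσ : Function.Involutive σ := Equiv.swap_apply_self z (z + 1)
  have hτ : Function.Involutive (Prod.map σ σ) := hσ.prodMap hσ
  have hα := hΨ.mem_sdiff_of_wall hz1 hzl hwall
  rw [katalan_eq_sum_powerset_erase hα, katalan_eq_sum_powerset_erase hα, hγ, add_comm,
    ← sum_powerset_image_of_involutive hτ (fun p => hΨ.prodMap_swap_mem hz1 hzl hceil hwall),
    ← sum_add_distrib]
  refine sum_eq_zero fun S _ => ?_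
  have hR : epsR (S.image (Prod.map σ σ)) = epsR S ∘ σ := by
    rw [epsR_image_perm, Equiv.symm_swap]
  have h₁ : γ ∘ σ - e + epsR S ∘ σ = (γ + epsR S + e) ∘ σ := by
    rw [Pi.add_comp, Pi.add_comp, show e ∘ σ = -e from eps_sub_eps_comp_swap z (z + 1)]; abel
  have h₂ : γ ∘ σ - e + epsR S ∘ σ + e = (γ + epsR S) ∘ σ := by
    rw [Pi.add_comp]; abel
  have hΦ := lowerProd_kprod_comp_swap hz1 hzl hcount
  rw [card_image_of_injective _ hτ.injective, hR, h₂, h₁, hΦ, hΦ, ← smul_add, sub_add_sub_cancel,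
    sub_self, smul_zero]

/-- If `Ψ` has a ceiling in columns `z, z+1`, a wall in rows `z, z+1`, and
`m_M(z) + 1 = m_M(z+1)`, then `K(Ψ; M; γ) + K(Ψ; M; s_zγ - ε_z + ε_{z+1}) = 0`. -/
theorem katalan_cancel (ℓ : ℕ) (Ψ : Finset (ℕ × ℕ)) (hΨ : IsRootIdeal ℓ Ψ)
    (M : Multiset ℕ) (hM : SuppIn ℓ M) (γ : ℕ → ℤ) (z : ℕ)
    (hz1 : 1 ≤ z) (hz2 : z ≤ ℓ)
    (hceil : HasCeiling Ψ z) (hwall : HasWall Ψ z)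
    (hcount : M.count z + 1 = M.count (z + 1)) :
    Katalan ℓ Ψ M γ +
      Katalan ℓ Ψ M
        (fun i => if i = z then γ (z + 1) - 1
          else if i = z + 1 then γ z + 1 else γ i) = 0 :=
  katalan_cancel_general ℓ Ψ hΨ M hM γ z hz1 hceil hwall hcount
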